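/- arXiv:2412.18976 — 3 statements merged into one kernel-verified Lean document; each statement's English description precedes it below -/
import Mathlib

section
/- Let g = (g₁, g₂) : [a,b] → ℝ² be absolutely continuous. Then for Lebesgue-almost every y ∈ ℝ the level set {t ∈ [a,b] : g₂(t) = y} is finite (in particular the image g([a,b]) meets the horizontal line ℝ × {y} in only finitely many points), and at every t ∈ [a,b] with g₂(t) = y the function g₂ is differentiable at t with g₂'(t) ≠ 0. -/
/-!
On `[a, b]` the second coordinate `g₂` coincides with `φ u = g₂ a + ∫ₐᵘ F`, where `F` is the
integrable function `G₂ · 𝟙_[a,b]`. By Lebesgue's differentiation theorem `φ' = F` off a null set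
`N`. Since the oscillation of `φ` on an interval is bounded by `∫ |F|` over it, `φ` has Luzin's
property (N), so `φ '' N` is null; `φ '' {φ' = 0}` is null by the one-dimensional Sard lemma.
For `y` outside these two images, and `y ≠ φ a` (which excludes the degenerate interval
`a = b`, where `derivWithin` is junk), `φ` has a nonzero derivative at each point of the level set
`{φ = y} ∩ [a, b]`. Its points are therefore isolated, and a compact set of isolated points is
finite.
-/

open MeasureTheory Set Filter
open scoped Interval

theorem IsCompact.finite_setOf_eq_of_hasDerivAt_ne_zero {𝕜 E : Type*} [NontriviallyNormedField 𝕜]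
    [NormedAddCommGroup E] [NormedSpace 𝕜 E] {f : 𝕜 → E} {K : Set 𝕜} {y : E}
    (hK : IsCompact K) (hf : ContinuousOn f K)
    (hd : ∀ x ∈ K, f x = y → ∃ f', HasDerivAt f f' x ∧ f' ≠ 0) :
    {x ∈ K | f x = y}.Finite := by
  have hL : IsCompact {x ∈ K | f x = y} :=
    hK.of_isClosed_subset (hf.preimage_isClosed_of_isClosed hK.isClosed isClosed_singleton)
      (sep_subset _ _)
  have hisolated : ∅ ∈ codiscreteWithin {x ∈ K | f x = y} := by
    rw [mem_codiscreteWithin]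
    rintro x ⟨hxK, rfl⟩
    obtain ⟨f', hf', hf'0⟩ := hd x hxK rfl
    rw [disjoint_principal_right]
    filter_upwards [hf'.eventually_ne hf'0] with z hz hzL
    exact hz hzL.1.2
  simpa using hL.finite_sdiff_of_mem_codiscreteWithin hisolated

theorem Real.volume_image_eq_zero_of_hasDerivWithinAt_zero {f : ℝ → ℝ} {s : Set ℝ}
    (hf : ∀ x ∈ s, HasDerivWithinAt f 0 s x) : volume (f '' s) = 0 := by
  refine addHaar_image_eq_zero_of_det_fderivWithin_eq_zero volume (f' := fun _ => 0)
    (fun x hx => ?_) (fun _ _ => ?_)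
  · simpa using (hf x hx).hasFDerivWithinAt
  · simp [ContinuousLinearMap.det]

theorem Real.volume_image_le_of_ordConnected {φ : ℝ → ℝ} {ν : Measure ℝ}
    (hφ : ∀ u v, edist (φ u) (φ v) ≤ ν [[u, v]]) {C : Set ℝ} (hC : C.OrdConnected) :
    volume (φ '' C) ≤ ν C := by
  refine (Real.volume_le_diam _).trans (Metric.ediam_le ?_)
  rintro _ ⟨u, hu, rfl⟩ _ ⟨v, hv, rfl⟩
  exact (hφ u v).trans (measure_mono (hC.uIcc_subset hu hv))

theorem Real.volume_image_le_of_isOpen {φ : ℝ → ℝ} {ν : Measure ℝ}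
    (hφ : ∀ u v, edist (φ u) (φ v) ≤ ν [[u, v]]) {U : Set ℝ} (hU : IsOpen U) :
    volume (φ '' U) ≤ ν U := by
  set S : Set (Set ℝ) := connectedComponentIn U '' U
  have hS_open : ∀ C ∈ S, IsOpen C := by
    rintro C ⟨x, -, rfl⟩
    exact hU.connectedComponentIn
  have hS_disj : S.PairwiseDisjoint id := by
    rintro C ⟨x, -, rfl⟩ D ⟨y, -, rfl⟩ hne
    refine disjoint_left.mpr fun z hzC hzD => hne ?_
    exact (connectedComponentIn_eq hzC).trans (connectedComponentIn_eq hzD).symm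
  have hS_count : S.Countable := hS_disj.countable_of_isOpen hS_open <| by
    rintro C ⟨x, hx, rfl⟩
    exact ⟨x, mem_connectedComponentIn hx⟩
  have hU_eq : U = ⋃₀ S :=
    Subset.antisymm (fun x hx => ⟨_, ⟨x, hx, rfl⟩, mem_connectedComponentIn hx⟩)
      (sUnion_subset <| by rintro C ⟨x, -, rfl⟩; exact connectedComponentIn_subset U x)
  calc volume (φ '' U) = volume (⋃ C ∈ S, φ '' C) := by
        rw [hU_eq, sUnion_eq_biUnion, image_iUnion₂]
    _ ≤ ∑' C : S, volume (φ '' C) := measure_biUnion_le volume hS_count _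
    _ ≤ ∑' C : S, ν C := ENNReal.tsum_le_tsum fun ⟨C, hC⟩ => by
        obtain ⟨x, -, rfl⟩ := hC
        exact Real.volume_image_le_of_ordConnected hφ
          isPreconnected_connectedComponentIn.ordConnected
    _ = ν U := by
        rw [hU_eq, measure_sUnion hS_count hS_disj fun C hC => (hS_open C hC).measurableSet]

theorem Real.volume_image_eq_zero_of_edist_le {φ : ℝ → ℝ} {ν : Measure ℝ} [ν.OuterRegular]
    (hν : ν ≪ volume) (hφ : ∀ u v, edist (φ u) (φ v) ≤ ν [[u, v]]) {s : Set ℝ}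
    (hs : volume s = 0) : volume (φ '' s) = 0 := by
  refine le_antisymm (ENNReal.le_of_forall_pos_le_add fun ε hε _ => ?_) zero_le
  obtain ⟨U, hsU, hU, hUε⟩ := s.exists_isOpen_lt_of_lt (μ := ν) ε (by simpa [hν hs] using hε)
  calc volume (φ '' s) ≤ volume (φ '' U) := measure_mono (image_mono hsU)
    _ ≤ ν U := Real.volume_image_le_of_isOpen hφ hU
    _ ≤ 0 + ε := by simpa using hUε.le

theorem MeasureTheory.Integrable.edist_intervalIntegral_le {F : ℝ → ℝ} (hF : Integrable F)
    (a u v : ℝ) :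
    edist (∫ t in a..u, F t) (∫ t in a..v, F t) ≤ volume.withDensity (‖F ·‖ₑ) [[u, v]] := by
  rw [edist_eq_enorm_sub, intervalIntegral.integral_interval_sub_left
    hF.intervalIntegrable hF.intervalIntegrable, withDensity_apply _ measurableSet_uIcc,
    ← ofReal_norm, intervalIntegral.norm_integral_eq_norm_integral_uIoc,
    ofReal_norm, uIcc_comm]
  exact (enorm_integral_le_lintegral_enorm _).trans (lintegral_mono_set uIoc_subset_uIcc)

theorem MeasureTheory.Integrable.ae_forall_hasDerivAt_ne_zero_of_add_intervalIntegral_eq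
    {F : ℝ → ℝ} (hF : Integrable F) (a c : ℝ) :
    ∀ᵐ y, ∀ t, c + ∫ s in a..t, F s = y →
      HasDerivAt (fun u => c + ∫ s in a..u, F s) (F t) t ∧ F t ≠ 0 := by
  set φ : ℝ → ℝ := fun u => c + ∫ s in a..u, F s
  set N : Set ℝ := {t | ¬ HasDerivAt φ (F t) t}
  set Z : Set ℝ := {t | HasDerivAt φ 0 t}
  have hN : volume N = 0 := by
    refine measure_eq_zero_iff_ae_notMem.mpr ?_
    filter_upwards [LocallyIntegrable.ae_hasDerivAt_integral hF.locallyIntegrable] with t ht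
    exact not_not.mpr ((ht a).const_add c)
  have hφN : volume (φ '' N) = 0 := by
    have : IsFiniteMeasure (volume.withDensity (‖F ·‖ₑ)) :=
      isFiniteMeasure_withDensity hF.2.ne
    refine Real.volume_image_eq_zero_of_edist_le
      (withDensity_absolutelyContinuous volume (‖F ·‖ₑ))
      (fun u v => ?_) hN
    simpa only [φ, edist_add_left] using hF.edist_intervalIntegral_le a u v
  have hφZ : volume (φ '' Z) = 0 :=
    Real.volume_image_eq_zero_of_hasDerivWithinAt_zero fun t ht => ht.hasDerivWithinAt
  filter_upwards [measure_eq_zero_iff_ae_notMem.mp (measure_union_null hφN hφZ)]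
    with y hy t hty
  have hderiv : HasDerivAt φ (F t) t := not_not.mp fun h => hy (Or.inl ⟨t, h, hty⟩)
  exact ⟨hderiv, fun h0 => hy (Or.inr ⟨t, show HasDerivAt φ 0 t from h0 ▸ hderiv, hty⟩)⟩

theorem snd_eq_add_intervalIntegral_indicator {E F : Type*} [NormedAddCommGroup E]
    [NormedSpace ℝ E] [CompleteSpace E] [NormedAddCommGroup F] [NormedSpace ℝ F] [CompleteSpace F]
    {g G : ℝ → E × F} {a b : ℝ}
    (hG : IntegrableOn G (Icc a b)) (hg : ∀ t ∈ Icc a b, g t = g a + ∫ s in a..t, G s) :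
    EqOn (fun t => (g t).2) (fun t => (g a).2 + ∫ s in a..t, (Icc a b).indicator (G · |>.2) s)
      (Icc a b) := by
  intro t ht
  have hsub : [[a, t]] ⊆ Icc a b := uIcc_subset_Icc (left_mem_Icc.2 (ht.1.trans ht.2)) ht
  have hGt : IntervalIntegrable G volume a t := (hG.mono_set hsub).intervalIntegrable
  have hsnd : (∫ s in a..t, G s).2 = ∫ s in a..t, (G s).2 :=
    ((ContinuousLinearMap.snd ℝ E F).intervalIntegral_comp_comm hGt).symm
  simp only [hg t ht, Prod.snd_add, hsnd]
  congr 1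
  exact intervalIntegral.integral_congr fun s hs => (indicator_of_mem (hsub hs) (G · |>.2)).symm

theorem statement0_general (a b : ℝ) (g G : ℝ → ℝ × ℝ)
    (hG : IntegrableOn G (Icc a b) volume)
    (hg : ∀ t ∈ Icc a b, g t = g a + ∫ s in a..t, G s) :
    ∀ᵐ y : ℝ,
      {t | t ∈ Icc a b ∧ (g t).2 = y}.Finite ∧
      ∀ t ∈ Icc a b, (g t).2 = y →
        DifferentiableWithinAt ℝ (fun s => (g s).2) (Icc a b) t ∧
        derivWithin (fun s => (g s).2) (Icc a b) t ≠ 0 := by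
  set F : ℝ → ℝ := (Icc a b).indicator (G · |>.2)
  have hF : Integrable F := (integrable_indicator_iff measurableSet_Icc).2 hG.snd
  set φ : ℝ → ℝ := fun u => (g a).2 + ∫ s in a..u, F s
  have hgφ : EqOn (fun t => (g t).2) φ (Icc a b) := snd_eq_add_intervalIntegral_indicator hG hg
  filter_upwards [hF.ae_forall_hasDerivAt_ne_zero_of_add_intervalIntegral_eq a (g a).2,
    volume.ae_ne (φ a)] with y hy hya
  have hlevel : ∀ t ∈ Icc a b, (g t).2 = y → HasDerivAt φ (F t) t ∧ F t ≠ 0 :=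
    fun t ht hty => hy t ((hgφ ht).symm.trans hty)
  refine ⟨?_, fun t ht hty => ?_⟩
  · have hset : {t | t ∈ Icc a b ∧ (g t).2 = y} = {t ∈ Icc a b | φ t = y} := by
      ext t
      exact and_congr_right fun ht => by rw [← hgφ ht]
    rw [hset]
    refine isCompact_Icc.finite_setOf_eq_of_hasDerivAt_ne_zero
      (continuous_const.add (hF.continuous_primitive a)).continuousOn fun t ht hty => ?_
    exact ⟨F t, hlevel t ht ((hgφ ht).trans hty)⟩
  · obtain ⟨hderiv, hF0⟩ := hlevel t ht hty
    have hta : t ≠ a := by rintro rfl; exact hya (hty ▸ hgφ ht)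
    have hdw : HasDerivWithinAt (fun s => (g s).2) (F t) (Icc a b) t :=
      hderiv.hasDerivWithinAt.congr_of_mem (fun s hs => hgφ hs) ht
    refine ⟨hdw.differentiableWithinAt, ?_⟩
    rwa [hdw.derivWithin (uniqueDiffOn_Icc ((ht.1.lt_of_ne' hta).trans_le ht.2) t ht)]

/-- Lemma 6.1 of the paper.
If `g = (g₁, g₂) : [a,b] → ℝ²` is absolutely continuous (i.e. `g t = g a + ∫ₐᵗ G`
for an integrable `G`), then for Lebesgue-a.e. `y ∈ ℝ` the level set
`{t ∈ [a,b] : g₂ t = y}` is finite, and at every `t ∈ [a,b]` with `g₂ t = y`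
the function `g₂` is differentiable at `t` (within `[a,b]`) with nonzero derivative. -/
theorem statement0 (a b : ℝ) (hab : a ≤ b) (g G : ℝ → ℝ × ℝ)
    (hG : IntegrableOn G (Icc a b) volume)
    (hg : ∀ t ∈ Icc a b, g t = g a + ∫ s in a..t, G s) :
    ∀ᵐ y : ℝ,
      {t | t ∈ Icc a b ∧ (g t).2 = y}.Finite ∧
      ∀ t ∈ Icc a b, (g t).2 = y →
        DifferentiableWithinAt ℝ (fun s => (g s).2) (Icc a b) t ∧
        derivWithin (fun s => (g s).2) (Icc a b) t ≠ 0 :=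
  statement0_general a b g G hG hg
end

section
/- Let n ≥ 1, let G ⊆ ℝⁿ be Lebesgue measurable, and let x ∈ G be a point of Lebesgue density 1 of G. Let f : ℝⁿ → ℝⁿ be injective on G and Fréchet differentiable at x with invertible derivative A = Df(x), and let h : f(G) → ℝⁿ be the inverse of the restriction f|_G, so h(f(a)) = a for all a ∈ G. If h is differentiable at y = f(x) within f(G), i.e. there exists a linear map L : ℝⁿ → ℝⁿ with h(z) − h(y) − L(z−y) = o(|z−y|) as z → y with z ∈ f(G), then L = A⁻¹. -/
open MeasureTheory Filter Set Metric
open scoped Topology Pointwise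

/-!
At a point of Lebesgue density one, `G` meets every small rescaled ball `x + r • ball v ε`,
so every vector is tangent to `G` at `x` and derivatives within `G` at `x` are unique.
Differentiating `h ∘ f = id` on `G` by the chain rule then forces `L ∘ A = id`.
-/

theorem mem_tangentConeAt_of_eventually_nonempty_inter_smul_ball {E : Type*}
    [NormedAddCommGroup E] [NormedSpace ℝ E] {s : Set E} {x v : E}
    (h : ∀ ε > 0, ∀ᶠ r in 𝓝[>] (0 : ℝ), (s ∩ ({x} + r • ball v ε)).Nonempty) :
    v ∈ tangentConeAt ℝ s x := by
  rw [tangentConeAt_eq_biInter_closure, mem_iInter₂]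
  intro U hU
  refine Metric.mem_closure_iff.2 fun ε hε => ?_
  have hsmall : ∀ᶠ r in 𝓝[>] (0 : ℝ), r • ball v ε ⊆ U := by
    have : ∀ᶠ r in 𝓝 (0 : ℝ), r • ball v ε ⊆ U := by
      simpa using eventually_singleton_add_smul_subset isBounded_ball hU
    exact nhdsWithin_le_nhds this
  obtain ⟨r, ⟨y, hys, hy⟩, hrU, hr⟩ :=
    ((h ε hε).and (hsmall.and self_mem_nhdsWithin)).exists
  obtain ⟨a, ha, hay⟩ : ∃ a ∈ ball v ε, r • a = -x + y := by simpa [mem_smul_set] using hy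
  obtain rfl : y = x + r • a := by rw [hay, add_neg_cancel_left]
  refine ⟨a, ⟨r⁻¹, mem_univ _, r • a, ⟨hrU (smul_mem_smul_set ha), hys⟩, ?_⟩, ?_⟩
  · simp [smul_smul, inv_mul_cancel₀ (ne_of_gt hr)]
  · simpa [dist_comm] using ha

section DensityPoint

variable {E : Type*} [NormedAddCommGroup E] [NormedSpace ℝ E] [FiniteDimensional ℝ E]
  [MeasurableSpace E] [BorelSpace E] (μ : Measure E) [μ.IsAddHaarMeasure] {s : Set E} {x : E}

theorem tendsto_addHaar_inter_closedBall_div_of_ball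
    (h : Tendsto (fun r => μ (s ∩ ball x r) / μ (ball x r)) (𝓝[>] 0) (𝓝 1)) :
    Tendsto (fun r => μ (s ∩ closedBall x r) / μ (closedBall x r)) (𝓝[>] 0) (𝓝 1) := by
  refine tendsto_of_tendsto_of_tendsto_of_le_of_le' h tendsto_const_nhds ?_ ?_
  · filter_upwards [self_mem_nhdsWithin] with r (hr : 0 < r)
    rw [Measure.addHaar_closedBall μ x hr.le, ← Measure.addHaar_ball_of_pos μ x hr]
    gcongr
    exact ball_subset_closedBall
  · exact Eventually.of_forall fun r =>
      (ENNReal.div_le_div_right (measure_mono inter_subset_right) _).trans ENNReal.div_self_le_one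

theorem tangentConeAt_eq_univ_of_density_one
    (h : Tendsto (fun r => μ (s ∩ closedBall x r) / μ (closedBall x r)) (𝓝[>] 0) (𝓝 1)) :
    tangentConeAt ℝ s x = univ :=
  eq_univ_of_forall fun v => mem_tangentConeAt_of_eventually_nonempty_inter_smul_ball
    fun _ hε => Measure.eventually_nonempty_inter_smul_of_density_one μ s x h _
      measurableSet_ball (measure_ball_pos μ v hε).ne'

theorem uniqueDiffWithinAt_of_density_one
    (h : Tendsto (fun r => μ (s ∩ closedBall x r) / μ (closedBall x r)) (𝓝[>] 0) (𝓝 1)) :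
    UniqueDiffWithinAt ℝ s x := by
  have hcone := tangentConeAt_eq_univ_of_density_one μ h
  refine ⟨?_, mem_closure_of_nonempty_tangentConeAt (𝕜 := ℝ) ?_⟩ <;> rw [hcone]
  · simp
  · exact univ_nonempty

end DensityPoint

section LeftInverse

variable {𝕜 E F : Type*} [NontriviallyNormedField 𝕜] [NormedAddCommGroup E] [NormedSpace 𝕜 E]
  [NormedAddCommGroup F] [NormedSpace 𝕜 F] {f : E → F} {g : F → E} {s : Set E} {x : E}

theorem HasFDerivWithinAt.comp_eq_id_of_leftInvOn {A : E →L[𝕜] F} {L : F →L[𝕜] E}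
    (hf : HasFDerivWithinAt f A s x) (hg : HasFDerivWithinAt g L (f '' s) (f x))
    (hinv : LeftInvOn g f s) (hx : x ∈ s) (hs : UniqueDiffWithinAt 𝕜 s x) :
    L.comp A = ContinuousLinearMap.id 𝕜 E :=
  hs.eq (hg.comp x hf (mapsTo_image f s))
    ((hasFDerivWithinAt_id x s).congr hinv (hinv hx))

theorem HasFDerivWithinAt.eq_symm_of_leftInvOn {A : E ≃L[𝕜] F} {L : F →L[𝕜] E}
    (hf : HasFDerivWithinAt f (A : E →L[𝕜] F) s x) (hg : HasFDerivWithinAt g L (f '' s) (f x))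
    (hinv : LeftInvOn g f s) (hx : x ∈ s) (hs : UniqueDiffWithinAt 𝕜 s x) :
    L = (A.symm : F →L[𝕜] E) := by
  have hLA := hf.comp_eq_id_of_leftInvOn hg hinv hx hs
  ext y
  simpa using congrArg (fun T : E →L[𝕜] E => T (A.symm y)) hLA

end LeftInverse

theorem statement8_general (n : ℕ) (G : Set (EuclideanSpace ℝ (Fin n)))
    (x : EuclideanSpace ℝ (Fin n)) (hx : x ∈ G)
    (hdens : Tendsto
      (fun r : ℝ => volume (G ∩ Metric.ball x r) / volume (Metric.ball x r))
      (𝓝[>] (0 : ℝ)) (𝓝 1))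
    (f h : EuclideanSpace ℝ (Fin n) → EuclideanSpace ℝ (Fin n))
    (A : EuclideanSpace ℝ (Fin n) ≃L[ℝ] EuclideanSpace ℝ (Fin n))
    (hdf : HasFDerivAt f
      (A : EuclideanSpace ℝ (Fin n) →L[ℝ] EuclideanSpace ℝ (Fin n)) x)
    (hinv : ∀ a ∈ G, h (f a) = a)
    (L : EuclideanSpace ℝ (Fin n) →L[ℝ] EuclideanSpace ℝ (Fin n))
    (hdh : HasFDerivWithinAt h L (f '' G) (f x)) :
    L = (A.symm : EuclideanSpace ℝ (Fin n) →L[ℝ] EuclideanSpace ℝ (Fin n)) :=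
  hdf.hasFDerivWithinAt.eq_symm_of_leftInvOn hdh hinv hx
    (uniqueDiffWithinAt_of_density_one volume
      (tendsto_addHaar_inter_closedBall_div_of_ball volume hdens))

/-- differentiation of the inverse, from the proof of Lemma 4.2.
Let `x ∈ G` be a point of Lebesgue density `1` of a measurable set `G ⊆ ℝⁿ`, let `f` be
injective on `G` and differentiable at `x` with invertible derivative `A`, and let `h` be
the inverse of `f|_G`.  If `h` is differentiable at `y = f x` within `f '' G` with
derivative `L`, then `L = A⁻¹`. -/
theorem statement8 (n : ℕ) (hn : 1 ≤ n) (G : Set (EuclideanSpace ℝ (Fin n)))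
    (hG : MeasurableSet G) (x : EuclideanSpace ℝ (Fin n)) (hx : x ∈ G)
    (hdens : Tendsto
      (fun r : ℝ => volume (G ∩ Metric.ball x r) / volume (Metric.ball x r))
      (𝓝[>] (0 : ℝ)) (𝓝 1))
    (f h : EuclideanSpace ℝ (Fin n) → EuclideanSpace ℝ (Fin n))
    (hinj : Set.InjOn f G)
    (A : EuclideanSpace ℝ (Fin n) ≃L[ℝ] EuclideanSpace ℝ (Fin n))
    (hdf : HasFDerivAt f
      (A : EuclideanSpace ℝ (Fin n) →L[ℝ] EuclideanSpace ℝ (Fin n)) x)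
    (hinv : ∀ a ∈ G, h (f a) = a)
    (L : EuclideanSpace ℝ (Fin n) →L[ℝ] EuclideanSpace ℝ (Fin n))
    (hdh : HasFDerivWithinAt h L (f '' G) (f x)) :
    L = (A.symm : EuclideanSpace ℝ (Fin n) →L[ℝ] EuclideanSpace ℝ (Fin n)) :=
  statement8_general n G x hx hdens f h A hdf hinv L hdh
end

section
/- Let n ≥ 2 and p > n−1 (with p ≥ 1 allowed when n = 2). Let Ω' ⊆ ℝⁿ be open, let h : Ω' → ℝⁿ be Lebesgue measurable, let μ be a locally finite Borel measure on Ω', let Φ : Ω' → [0,∞] be locally Lebesgue integrable, and let C > 0 be such that for every y ∈ Ω' and r > 0 with B(y,2r) ⊆ Ω' one has diam h(B(y,r)) ≤ C r^{1−n} μ(B(y,2r))^{(p−n+1)/p} ( ∫_{B(y,2r)} Φ dλ )^{(n−1)/p}. Then h is Fréchet differentiable at Lebesgue-almost every point of Ω', and there is a constant C' = C'(n,p,C) such that for almost every y ∈ Ω', ‖Dh(y)‖ ≤ C' · ( D̄μ(y) )^{(p−n+1)/p} · Φ(y)^{(n−1)/p}, where D̄μ(y) = limsup_{r→0+} μ(B(y,r))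 / λ(B(y,r)) is finite for almost every y. In particular ‖Dh‖ is locally Lebesgue integrable on Ω'. -/
/-!
Write `α = (p - n + 1) / p`, `β = (n - 1) / p` (so `α + β = 1`) and `ρ = Φ λ`. Since
`|B(y, 2r)| = (2r)ⁿ |B(0, 1)|`, the hypothesis says
`diam h(B(y, r)) / r ≤ C 2ⁿ |B(0, 1)| (μ(B) / |B|)^α (ρ(B) / |B|)^β` for `B = B(y, 2r)`, hence
`limsup_{r → 0} diam h(B(y, r)) / r ≤ C 2ⁿ |B(0, 1)| (D̄μ)^α (D̄ρ)^β`. By Besicovitch's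
differentiation theorem the upper densities are dominated by the Radon–Nikodym derivatives of the
restrictions of `μ` and `ρ` to small balls, so they are finite a.e. and `D̄ρ ≤ Φ` a.e. Thus `h` is
pointwise Lipschitz a.e., hence differentiable a.e. by Stepanov's theorem: on the pieces where `h`
is uniformly pointwise Lipschitz it has a Lipschitz extension, differentiable a.e. by Rademacher's
theorem, and at density points of the piece `h` agrees with it to first order. Finally `‖Dh‖` is
bounded by the diameter ratio, and Hölder's inequality for the two Radon–Nikodym derivatives makes
it locally integrable.
-/

open MeasureTheory Filter Metric Set
open scoped ENNReal NNReal Topology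

section Metric

variable {X Y : Type*} [PseudoMetricSpace X]

noncomputable def upperDensity [MeasurableSpace X] (μ ν : Measure X) (y : X) : ℝ≥0∞ :=
  limsup (fun r : ℝ => μ (ball y r) / ν (ball y r)) (𝓝[>] 0)

noncomputable def upperDiamRatio [PseudoEMetricSpace Y] (f : X → Y) (y : X) : ℝ≥0∞ :=
  limsup (fun r : ℝ => ediam (f '' ball y r) / ENNReal.ofReal r) (𝓝[>] 0)

theorem tendsto_const_mul_nhdsGT_zero {c : ℝ} (hc : 0 < c) :
    Tendsto (fun r : ℝ => c * r) (𝓝[>] 0) (𝓝[>] 0) :=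
  tendsto_nhdsWithin_of_tendsto_nhds_of_eventually_within _
    (((continuous_const_mul c).tendsto' 0 0 (mul_zero c)).mono_left nhdsWithin_le_nhds)
    (eventually_nhdsWithin_of_forall fun _ hr => mul_pos hc hr)

theorem eventually_nhdsGT_ball_subset {U : Set X} {y : X} (hU : U ∈ 𝓝 y) :
    ∀ᶠ r in 𝓝[>] (0 : ℝ), ball y r ⊆ U := by
  obtain ⟨ε, hε, hεU⟩ := Metric.mem_nhds_iff.1 hU
  filter_upwards [Ioo_mem_nhdsGT hε] with r hr using (ball_subset_ball hr.2.le).trans hεU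

theorem upperDensity_restrict_of_mem_nhds [MeasurableSpace X] [OpensMeasurableSpace X]
    (μ ν : Measure X) {U : Set X} {y : X} (hU : U ∈ 𝓝 y) :
    upperDensity (μ.restrict U) ν y = upperDensity μ ν y := by
  refine limsup_congr ?_
  filter_upwards [eventually_nhdsGT_ball_subset hU] with r hr
  rw [Measure.restrict_apply measurableSet_ball, inter_eq_left.2 hr]

theorem eventually_dist_le_of_upperDiamRatio_lt [PseudoMetricSpace Y] {f : X → Y} {y : X}
    {K : ℝ≥0} (hK : upperDiamRatio f y < K) :
    ∀ᶠ z in 𝓝 y, dist (f z) (f y) ≤ K * dist z y := by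
  obtain ⟨δ, hδ, hδK⟩ := mem_nhdsGT_iff_exists_Ioo_subset.1 (eventually_lt_of_limsup_lt hK)
  have hbound : ∀ z, ∀ r ∈ Ioo (dist z y) δ, dist (f z) (f y) ≤ K * r := by
    intro z r hr
    have hr0 : 0 < r := dist_nonneg.trans_lt hr.1
    have hdiam : edist (f z) (f y) ≤ ediam (f '' ball y r) :=
      edist_le_ediam_of_mem (mem_image_of_mem f hr.1)
        (mem_image_of_mem f (mem_ball_self hr0))
    have hratio : ediam (f '' ball y r) < K * ENNReal.ofReal r := by
      rw [← ENNReal.div_lt_iff (Or.inl (by simpa using hr0)) (Or.inl ENNReal.ofReal_ne_top)]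
      exact hδK ⟨hr0, hr.2⟩
    rw [edist_dist] at hdiam
    rw [← ENNReal.ofReal_coe_nnreal, ← ENNReal.ofReal_mul K.coe_nonneg] at hratio
    exact (ENNReal.ofReal_le_ofReal_iff (by positivity)).1 (hdiam.trans hratio.le)
  filter_upwards [ball_mem_nhds y hδ] with z hz
  exact ge_of_tendsto (((continuous_const_mul (K : ℝ)).tendsto _).mono_left nhdsWithin_le_nhds)
    (mem_of_superset (Ioo_mem_nhdsGT hz) (hbound z))

theorem measure_ball_ne_top_of_closedBall_subset [ProperSpace X] [MeasurableSpace X]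
    {μ : Measure X} {U : Set X} (hμ : ∀ y ∈ U, μ.FiniteAtFilter (𝓝 y)) {x : X} {r : ℝ}
    (hxr : closedBall x r ⊆ U) : μ (ball x r) ≠ ⊤ :=
  ((measure_mono ball_subset_closedBall).trans_lt
    ((isCompact_closedBall x r).measure_lt_top_of_nhdsWithin
      fun z hz => (hμ z (hxr hz)).filter_mono nhdsWithin_le_nhds)).ne

theorem ae_restrict_of_forall_closedBall_subset [SecondCountableTopology X] [MeasurableSpace X]
    {μ : Measure X} {U : Set X} (hU : IsOpen U) {P : X → Prop}
    (h : ∀ x r, closedBall x r ⊆ U → ∀ᵐ y ∂μ.restrict (ball x r), P y) :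
    ∀ᵐ y ∂μ.restrict U, P y := by
  have hr : ∀ x ∈ U, ∃ r, 0 < r ∧ closedBall x r ⊆ U := fun x hx =>
    nhds_basis_closedBall.mem_iff.1 (hU.mem_nhds hx)
  choose! r hr0 hrU using hr
  obtain ⟨S, hSU, hSc, hcover⟩ := TopologicalSpace.countable_cover_nhdsWithin
    fun x hx => mem_nhdsWithin_of_mem_nhds (ball_mem_nhds x (hr0 x hx))
  exact ae_restrict_of_ae_restrict_of_subset hcover
    ((ae_restrict_biUnion_iff _ hSc P).2 fun x hx => h x (r x) (hrU x (hSU hx)))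

end Metric

theorem finiteAtFilter_withDensity {X : Type*} [TopologicalSpace X] [LocallyCompactSpace X]
    [MeasurableSpace X] {ν : Measure X} [SFinite ν] {Φ : X → ℝ≥0∞} {U : Set X} (hU : IsOpen U)
    (hΦ : ∀ K ⊆ U, IsCompact K → ∫⁻ x in K, Φ x ∂ν < ⊤) {y : X} (hy : y ∈ U) :
    (ν.withDensity Φ).FiniteAtFilter (𝓝 y) := by
  obtain ⟨K, hK, hKU, hKc⟩ := local_compact_nhds (hU.mem_nhds hy)
  exact ⟨K, hK, (withDensity_apply' Φ K).trans_lt (hΦ K hKU hKc)⟩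

namespace ENNReal

theorem rpow_mul_rpow_eq_mul_div_rpow {a b v : ℝ≥0∞} (hv0 : v ≠ 0) (hv : v ≠ ⊤) {α β : ℝ}
    (hα : 0 ≤ α) (hβ : 0 ≤ β) (hαβ : α + β = 1) :
    a ^ α * b ^ β = v * ((a / v) ^ α * (b / v) ^ β) := by
  conv_lhs => rw [← ENNReal.div_mul_cancel hv0 hv (b := a),
    ← ENNReal.div_mul_cancel hv0 hv (b := b), mul_rpow_of_nonneg _ _ hα, mul_rpow_of_nonneg _ _ hβ]
  calc _ = v ^ α * v ^ β * ((a / v) ^ α * (b / v) ^ β) := by ring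
    _ = _ := by rw [← rpow_add _ _ hv0 hv, hαβ, rpow_one]

theorem limsup_rpow_mul_rpow_le {ι : Type*} {l : Filter ι} [l.NeBot] {u v : ι → ℝ≥0∞}
    {a b : ℝ≥0∞} {α β : ℝ} (hα : 0 ≤ α) (hβ : 0 ≤ β) (hu : limsup u l ≤ a) (hv : limsup v l ≤ b)
    (ha : a ≠ ⊤) (hb : b ≠ ⊤) :
    limsup (fun i => u i ^ α * v i ^ β) l ≤ a ^ α * b ^ β := by
  have hpow : ∀ {w : ι → ℝ≥0∞} {γ : ℝ}, 0 ≤ γ → limsup (fun i => w i ^ γ) l = limsup w l ^ γ :=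
    fun hγ => ((monotone_rpow_of_nonneg hγ).map_limsup_of_continuousAt _
      (continuous_rpow_const.continuousAt)).symm
  have hu' : limsup (fun i => u i ^ α) l ≤ a ^ α := (hpow hα).trans_le (rpow_le_rpow hu hα)
  have hv' : limsup (fun i => v i ^ β) l ≤ b ^ β := (hpow hβ).trans_le (rpow_le_rpow hv hβ)
  calc limsup (fun i => u i ^ α * v i ^ β) l
      ≤ limsup (fun i => u i ^ α) l * limsup (fun i => v i ^ β) l :=
        limsup_mul_le' (Or.inr (ne_top_of_le_ne_top (rpow_ne_top_of_nonneg hβ hb) hv'))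
          (Or.inl (ne_top_of_le_ne_top (rpow_ne_top_of_nonneg hα ha) hu'))
    _ ≤ a ^ α * b ^ β := mul_le_mul' hu' hv'

end ENNReal

section Normed

variable {E F : Type*} [NormedAddCommGroup E] [NormedSpace ℝ E]
  [NormedAddCommGroup F] [NormedSpace ℝ F]

theorem nnnorm_fderiv_le_upperDiamRatio (f : E → F) (y : E) :
    (‖fderiv ℝ f y‖₊ : ℝ≥0∞) ≤ upperDiamRatio f y := by
  by_contra! hlt
  obtain ⟨K, hK, hKf⟩ := ENNReal.lt_iff_exists_nnreal_btwn.1 hlt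
  have hle : ‖fderiv ℝ f y‖ ≤ K := norm_fderiv_le_of_lip' ℝ K.coe_nonneg
    (by simpa only [dist_eq_norm] using eventually_dist_le_of_upperDiamRatio_lt hK)
  exact hKf.not_ge (by exact_mod_cast hle)

end Normed

section FiniteDimensional

variable {E F : Type*} [NormedAddCommGroup E] [NormedSpace ℝ E] [FiniteDimensional ℝ E]
  [MeasurableSpace E] [BorelSpace E] {ν : Measure E} [ν.IsAddHaarMeasure]
  [NormedAddCommGroup F] [NormedSpace ℝ F] [FiniteDimensional ℝ F]

theorem eventually_exists_mem_dist_le_of_density_one {A : Set E} {y : E} (hyA : y ∈ A)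
    (hA : Tendsto (fun r => ν (A ∩ closedBall y r) / ν (closedBall y r)) (𝓝[>] 0) (𝓝 1))
    {ε : ℝ} (hε : 0 < ε) :
    ∀ᶠ z in 𝓝 y, ∃ a ∈ A, dist a z ≤ ε * dist z y := by
  set θ : ℝ≥0∞ := ENNReal.ofReal ((ε / (1 + ε)) ^ Module.finrank ℝ E)
  have hθ : θ ≠ 0 := by
    simp only [θ, ne_eq, ENNReal.ofReal_eq_zero, not_le]
    positivity
  obtain ⟨δ, hδ, hδA⟩ := mem_nhdsGT_iff_exists_Ioo_subset.1
    (hA.eventually (eventually_gt_nhds (ENNReal.sub_lt_self ENNReal.one_ne_top one_ne_zero hθ)))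
  filter_upwards [ball_mem_nhds y (div_pos hδ (by positivity : (0 : ℝ) < 1 + ε))] with z hz
  rcases eq_or_ne z y with rfl | hzy
  · exact ⟨z, hyA, by simp⟩
  by_contra! hfar
  set d := dist z y
  have hd : 0 < d := dist_pos.2 hzy
  have hR : (1 + ε) * d < δ := by
    rw [mem_ball, lt_div_iff₀ (by positivity)] at hz
    linarith
  -- `ball z (ε d)` misses `A` and fills the fixed proportion `θ` of `closedBall y ((1 + ε) d)`.
  have hsub : ball z (ε * d) ⊆ closedBall y ((1 + ε) * d) := fun w hw => by
    rw [mem_closedBall]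
    linarith [dist_triangle w z y, mem_ball.1 hw]
  have hcompl : A ∩ closedBall y ((1 + ε) * d) ⊆ closedBall y ((1 + ε) * d) \ ball z (ε * d) :=
    fun a ha => ⟨ha.2, fun haz => (hfar a ha.1).not_ge (mem_ball.1 haz).le⟩
  have hvol : ν (ball z (ε * d)) = θ * ν (closedBall y ((1 + ε) * d)) := by
    rw [Measure.addHaar_ball_of_pos ν z (by positivity),
      Measure.addHaar_closedBall ν y (by positivity), ← mul_assoc,
      ← ENNReal.ofReal_mul (by positivity), ← mul_pow]
    congr 3
    field_simp
  have hle : ν (A ∩ closedBall y ((1 + ε) * d)) / ν (closedBall y ((1 + ε) * d)) ≤ 1 - θ := by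
    refine ENNReal.div_le_of_le_mul ?_
    calc ν (A ∩ closedBall y ((1 + ε) * d))
        ≤ ν (closedBall y ((1 + ε) * d) \ ball z (ε * d)) := measure_mono hcompl
      _ = ν (closedBall y ((1 + ε) * d)) - ν (ball z (ε * d)) :=
        measure_sdiff hsub measurableSet_ball.nullMeasurableSet measure_ball_lt_top.ne
      _ = (1 - θ) * ν (closedBall y ((1 + ε) * d)) := by
        rw [ENNReal.sub_mul fun _ _ => measure_closedBall_lt_top.ne, one_mul, hvol]
  exact (hδA ⟨by positivity, hR⟩).not_ge hle

theorem isLittleO_sub_of_eqOn_of_density_one {G : Type*} [SeminormedAddCommGroup G]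
    {f g : E → G} {A : Set E} {y : E} {K L : ℝ≥0} {δ : ℝ} (hδ : 0 < δ)
    (hf : ∀ a ∈ A, ∀ z, dist z a < δ → dist (f z) (f a) ≤ K * dist z a)
    (hg : LipschitzWith L g) (hfg : EqOn f g A) (hyA : y ∈ A)
    (hA : Tendsto (fun r => ν (A ∩ closedBall y r) / ν (closedBall y r)) (𝓝[>] 0) (𝓝 1)) :
    (fun z => f z - g z) =o[𝓝 y] (fun z => z - y) := by
  refine Asymptotics.isLittleO_iff.2 fun c hc => ?_
  set ε := c / (K + L + 1)
  have hε : 0 < ε := by positivity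
  have hεc : (K + L) * ε ≤ c := by
    have : ε * (K + L + 1) = c := div_mul_cancel₀ _ (by positivity)
    nlinarith
  filter_upwards [eventually_exists_mem_dist_le_of_density_one hyA hA hε,
    ball_mem_nhds y (div_pos hδ hε)] with z ⟨a, haA, haz⟩ hz
  have hza : dist z a < δ := by
    rw [mem_ball, lt_div_iff₀ hε] at hz
    rw [dist_comm]
    linarith
  calc ‖f z - g z‖ = ‖(f z - f a) + (g a - g z)‖ := by rw [hfg haA]; abel_nf
    _ ≤ dist (f z) (f a) + dist (g a) (g z) := by
      rw [dist_eq_norm, dist_eq_norm]; exact norm_add_le _ _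
    _ ≤ K * dist z a + L * dist a z := add_le_add (hf a haA z hza) (hg.dist_le_mul a z)
    _ = (K + L) * dist a z := by rw [dist_comm z a]; ring
    _ ≤ (K + L) * (ε * dist z y) := by gcongr
    _ ≤ c * ‖z - y‖ := by rw [← dist_eq_norm, ← mul_assoc]; gcongr

theorem ae_differentiableAt_of_forall_mem_dist_le {f : E → F} {A : Set E} {K : ℝ≥0} {δ : ℝ}
    (hδ : 0 < δ) (hf : ∀ a ∈ A, ∀ z, dist z a < δ → dist (f z) (f a) ≤ K * dist z a)
    (hA : ∀ a ∈ A, ∀ b ∈ A, dist a b < δ) :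
    ∀ᵐ y ∂ν, y ∈ A → DifferentiableAt ℝ f y := by
  have hlip : LipschitzOnWith K f A :=
    LipschitzOnWith.of_dist_le_mul fun a ha b hb => hf b hb a (hA a ha b hb)
  obtain ⟨g, hg, hfg⟩ := hlip.extend_finite_dimension
  have hdiff : ∀ᵐ y ∂ν.restrict A, y ∈ A → DifferentiableAt ℝ f y := by
    filter_upwards [Besicovitch.ae_tendsto_measure_inter_div ν A,
      ae_restrict_of_ae hg.ae_differentiableAt] with y hdens hgy hyA
    have hfg' : HasFDerivAt (fun z => f z - g z) (0 : E →L[ℝ] F) y := by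
      refine hasFDerivAt_iff_isLittleO.2 ?_
      simpa [hfg hyA] using isLittleO_sub_of_eqOn_of_density_one hδ hf hg hfg hyA hdens
    have hsum : (g + fun z => f z - g z) = f := by ext z; simp
    simpa only [hsum] using hgy.add hfg'.differentiableAt
  exact (ae_imp_of_ae_restrict hdiff).mono fun y hy hyA => hy hyA hyA

theorem ae_differentiableAt_of_eventually_dist_le (f : E → F) :
    ∀ᵐ y ∂ν, (∃ K : ℝ≥0, ∀ᶠ z in 𝓝 y, dist (f z) (f y) ≤ K * dist z y) →
      DifferentiableAt ℝ f y := by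
  obtain ⟨e, he⟩ := TopologicalSpace.exists_dense_seq E
  set A : ℕ → ℕ → ℕ → Set E := fun M k j =>
    {a | ∀ z, dist z a < 1 / (k + 1) → dist (f z) (f a) ≤ M * dist z a} ∩
      ball (e j) (1 / (k + 1) / 2)
  have hA : ∀ M k j, ∀ᵐ y ∂ν, y ∈ A M k j → DifferentiableAt ℝ f y := fun M k j =>
    ae_differentiableAt_of_forall_mem_dist_le (K := M) (δ := 1 / (k + 1)) (by positivity)
      (fun a ha => by exact_mod_cast ha.1) fun a ha b hb => (dist_triangle_right a b (e j)).trans_lt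
        (by linarith [mem_ball.1 ha.2, mem_ball.1 hb.2])
  filter_upwards [ae_all_iff.2 fun M => ae_all_iff.2 fun k => ae_all_iff.2 (hA M k)]
    with y hy ⟨K, hK⟩
  obtain ⟨M, hM⟩ := exists_nat_ge (K : ℝ)
  obtain ⟨ρ, hρ, hρK⟩ := Metric.eventually_nhds_iff.1 hK
  obtain ⟨k, hk⟩ := exists_nat_one_div_lt hρ
  obtain ⟨j, hj⟩ := he.exists_dist_lt y (by positivity : (0 : ℝ) < 1 / (k + 1) / 2)
  refine hy M k j ⟨fun z hz => (hρK (hz.trans hk)).trans ?_, hj⟩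
  gcongr

theorem upperDensity_le_of_tendsto {μ : Measure E} {y : E} {c : ℝ≥0∞}
    (h : Tendsto (fun r => μ (closedBall y r) / ν (closedBall y r)) (𝓝[>] 0) (𝓝 c)) :
    upperDensity μ ν y ≤ c := by
  refine (limsup_le_limsup ?_).trans h.limsup_eq.le
  filter_upwards [self_mem_nhdsWithin] with r (hr : 0 < r)
  rw [Measure.addHaar_closedBall ν y hr.le, ← Measure.addHaar_ball_of_pos ν y hr]
  gcongr
  exact ball_subset_closedBall

theorem ae_upperDensity_le_rnDeriv_restrict {μ : Measure E} {V : Set E} (hV : IsOpen V)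
    (hμV : μ V ≠ ⊤) :
    ∀ᵐ y ∂ν.restrict V, upperDensity μ ν y ≤ (μ.restrict V).rnDeriv ν y := by
  have : IsFiniteMeasure (μ.restrict V) := isFiniteMeasure_restrict.2 hμV
  rw [ae_restrict_iff' hV.measurableSet]
  filter_upwards [Besicovitch.ae_tendsto_rnDeriv (μ.restrict V) ν] with y hy hyV
  rw [← upperDensity_restrict_of_mem_nhds μ ν (hV.mem_nhds hyV)]
  exact upperDensity_le_of_tendsto hy

theorem ae_upperDensity_lt_top {μ : Measure E} {U : Set E} (hU : IsOpen U)
    (hμ : ∀ y ∈ U, μ.FiniteAtFilter (𝓝 y)) :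
    ∀ᵐ y ∂ν.restrict U, upperDensity μ ν y < ⊤ := by
  refine ae_restrict_of_forall_closedBall_subset hU fun x r hxr => ?_
  have hμV := measure_ball_ne_top_of_closedBall_subset hμ hxr
  have : IsFiniteMeasure (μ.restrict (ball x r)) := isFiniteMeasure_restrict.2 hμV
  filter_upwards [ae_upperDensity_le_rnDeriv_restrict isOpen_ball hμV,
    ae_restrict_of_ae (Measure.rnDeriv_lt_top (μ.restrict (ball x r)) ν)] with y h1 h2
  exact h1.trans_lt h2

theorem ae_upperDensity_withDensity_le {Φ : E → ℝ≥0∞} (hΦ : Measurable Φ) {U : Set E}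
    (hU : IsOpen U) (hρ : ∀ y ∈ U, (ν.withDensity Φ).FiniteAtFilter (𝓝 y)) :
    ∀ᵐ y ∂ν.restrict U, upperDensity (ν.withDensity Φ) ν y ≤ Φ y := by
  refine ae_restrict_of_forall_closedBall_subset hU fun x r hxr => ?_
  have hV : MeasurableSet (ball x r) := measurableSet_ball
  have hrestrict :
      (ν.withDensity Φ).restrict (ball x r) = ν.withDensity ((ball x r).indicator Φ) := by
    rw [restrict_withDensity hV, withDensity_indicator hV]
  filter_upwards [ae_upperDensity_le_rnDeriv_restrict isOpen_ball
      (measure_ball_ne_top_of_closedBall_subset hρ hxr),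
    ae_restrict_of_ae (Measure.rnDeriv_withDensity ν (hΦ.indicator hV)), ae_restrict_mem hV]
    with y h1 h2 hy
  rwa [hrestrict, h2, indicator_of_mem hy] at h1

theorem setLIntegral_upperDensity_rpow_mul_rpow_le {μ ρ : Measure E} {V : Set E} (hV : IsOpen V)
    (hμV : μ V ≠ ⊤) (hρV : ρ V ≠ ⊤) {α β : ℝ} (hα : 0 ≤ α) (hβ : 0 ≤ β) (hαβ : α + β = 1) :
    ∫⁻ y in V, upperDensity μ ν y ^ α * upperDensity ρ ν y ^ β ∂ν ≤ μ V ^ α * ρ V ^ β := by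
  have hrn : ∀ τ : Measure E, ∫⁻ y in V, (τ.restrict V).rnDeriv ν y ∂ν ≤ τ V := fun τ =>
    (setLIntegral_le_lintegral _ _).trans
      (Measure.lintegral_rnDeriv_le.trans (Measure.restrict_apply_univ V).le)
  calc ∫⁻ y in V, upperDensity μ ν y ^ α * upperDensity ρ ν y ^ β ∂ν
      ≤ ∫⁻ y in V, (μ.restrict V).rnDeriv ν y ^ α * (ρ.restrict V).rnDeriv ν y ^ β ∂ν := by
        refine lintegral_mono_ae ?_
        filter_upwards [ae_upperDensity_le_rnDeriv_restrict hV hμV,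
          ae_upperDensity_le_rnDeriv_restrict hV hρV] with y hμy hρy
        gcongr
    _ ≤ (∫⁻ y in V, (μ.restrict V).rnDeriv ν y ∂ν) ^ α *
          (∫⁻ y in V, (ρ.restrict V).rnDeriv ν y ∂ν) ^ β :=
        ENNReal.lintegral_mul_norm_pow_le (Measure.measurable_rnDeriv _ _).aemeasurable
          (Measure.measurable_rnDeriv _ _).aemeasurable hα hβ hαβ
    _ ≤ μ V ^ α * ρ V ^ β := by gcongr <;> exact hrn _

theorem upperDiamRatio_le_of_eventually_diam_le {Y : Type*} [PseudoEMetricSpace Y] {f : E → Y}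
    {μ ρ : Measure E} {y : E} {C α β : ℝ} (hC : 0 ≤ C) (hα : 0 ≤ α) (hβ : 0 ≤ β)
    (hαβ : α + β = 1)
    (hdiam : ∀ᶠ r in 𝓝[>] 0, ediam (f '' ball y r) ≤
      ENNReal.ofReal (C * r ^ (1 - (Module.finrank ℝ E : ℝ))) * μ (ball y (2 * r)) ^ α *
        ρ (ball y (2 * r)) ^ β)
    (hμ : upperDensity μ ν y ≠ ⊤) (hρ : upperDensity ρ ν y ≠ ⊤) :
    upperDiamRatio f y ≤ ENNReal.ofReal (C * 2 ^ Module.finrank ℝ E) * ν (ball 0 1) *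
      (upperDensity μ ν y ^ α * upperDensity ρ ν y ^ β) := by
  set n := Module.finrank ℝ E
  set K₀ := ENNReal.ofReal (C * 2 ^ n) * ν (ball 0 1)
  have hK₀ : K₀ ≠ ⊤ := ENNReal.mul_ne_top ENNReal.ofReal_ne_top measure_ball_lt_top.ne
  set u : Measure E → ℝ → ℝ≥0∞ := fun τ r => τ (ball y r) / ν (ball y r)
  have hscale : ∀ r : ℝ, 0 < r →
      ENNReal.ofReal (C * r ^ (1 - (n : ℝ))) * ν (ball y (2 * r)) = ENNReal.ofReal r * K₀ := by
    intro r hr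
    rw [Measure.addHaar_ball_of_pos ν y (by positivity), ← mul_assoc,
      ← ENNReal.ofReal_mul (by positivity), ← mul_assoc, ← ENNReal.ofReal_mul hr.le]
    congr 2
    have hpow : r ^ (1 - (n : ℝ)) * r ^ n = r := by
      rw [← Real.rpow_natCast, ← Real.rpow_add hr]
      simp
    calc C * r ^ (1 - (n : ℝ)) * (2 * r) ^ n = C * 2 ^ n * (r ^ (1 - (n : ℝ)) * r ^ n) := by ring
      _ = r * (C * 2 ^ n) := by rw [hpow]; ring
  have hev : ∀ᶠ r in 𝓝[>] 0, ediam (f '' ball y r) / ENNReal.ofReal r ≤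
      K₀ * (u μ (2 * r) ^ α * u ρ (2 * r) ^ β) := by
    filter_upwards [hdiam, self_mem_nhdsWithin] with r hr (hr0 : 0 < r)
    have hν0 : ν (ball y (2 * r)) ≠ 0 := (measure_ball_pos ν y (by positivity)).ne'
    refine ENNReal.div_le_of_le_mul' (hr.trans_eq ?_)
    rw [mul_assoc, ENNReal.rpow_mul_rpow_eq_mul_div_rpow hν0 measure_ball_lt_top.ne hα hβ hαβ,
      ← mul_assoc, hscale r hr0, mul_assoc]
  have hu : ∀ τ : Measure E, limsup (fun r => u τ (2 * r)) (𝓝[>] 0) ≤ upperDensity τ ν y :=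
    fun τ => (tendsto_const_mul_nhdsGT_zero two_pos).limsup_comp_le_limsup (u := u τ)
  calc upperDiamRatio f y
      ≤ limsup (fun r => K₀ * (u μ (2 * r) ^ α * u ρ (2 * r) ^ β)) (𝓝[>] 0) :=
        limsup_le_limsup hev
    _ = K₀ * limsup (fun r => u μ (2 * r) ^ α * u ρ (2 * r) ^ β) (𝓝[>] 0) :=
        ENNReal.limsup_const_mul_of_ne_top hK₀
    _ ≤ K₀ * (upperDensity μ ν y ^ α * upperDensity ρ ν y ^ β) := by
      gcongr
      exact ENNReal.limsup_rpow_mul_rpow_le hα hβ (hu μ) (hu ρ) hμ hρ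

theorem locallyIntegrableOn_of_enorm_le_upperDensity {G : Type*} [NormedAddCommGroup G]
    {g : E → G} (hg : AEStronglyMeasurable g ν)
    {U : Set E} (hU : IsOpen U) {μ ρ : Measure E} (hμ : ∀ y ∈ U, μ.FiniteAtFilter (𝓝 y))
    (hρ : ∀ y ∈ U, ρ.FiniteAtFilter (𝓝 y)) {K : ℝ≥0∞} (hK : K ≠ ⊤) {α β : ℝ} (hα : 0 ≤ α)
    (hβ : 0 ≤ β) (hαβ : α + β = 1)
    (hgK : ∀ᵐ y ∂ν.restrict U, ‖g y‖ₑ ≤ K * (upperDensity μ ν y ^ α * upperDensity ρ ν y ^ β)) :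
    LocallyIntegrableOn g U ν := by
  intro x hx
  obtain ⟨r, hr0, hrU⟩ := nhds_basis_closedBall.mem_iff.1 (hU.mem_nhds hx)
  have hμV := measure_ball_ne_top_of_closedBall_subset hμ hrU
  have hρV := measure_ball_ne_top_of_closedBall_subset hρ hrU
  refine ⟨ball x r, mem_nhdsWithin_of_mem_nhds (ball_mem_nhds x hr0), hg.restrict, ?_⟩
  rw [hasFiniteIntegral_iff_enorm]
  calc ∫⁻ y in ball x r, ‖g y‖ₑ ∂ν
      ≤ ∫⁻ y in ball x r, K * (upperDensity μ ν y ^ α * upperDensity ρ ν y ^ β) ∂ν :=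
        lintegral_mono_ae
          (ae_restrict_of_ae_restrict_of_subset (ball_subset_closedBall.trans hrU) hgK)
    _ = K * ∫⁻ y in ball x r, upperDensity μ ν y ^ α * upperDensity ρ ν y ^ β ∂ν :=
        lintegral_const_mul' _ _ hK
    _ ≤ K * (μ (ball x r) ^ α * ρ (ball x r) ^ β) := by
        gcongr
        exact setLIntegral_upperDensity_rpow_mul_rpow_le isOpen_ball hμV hρV hα hβ hαβ
    _ < ⊤ := ENNReal.mul_lt_top hK.lt_top (ENNReal.mul_lt_top
        (ENNReal.rpow_lt_top_of_nonneg hα hμV) (ENNReal.rpow_lt_top_of_nonneg hβ hρV))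

theorem ae_differentiableAt_and_nnnorm_fderiv_le {f : E → F} {μ ρ : Measure E} {U : Set E}
    (hU : IsOpen U) (hμ : ∀ y ∈ U, μ.FiniteAtFilter (𝓝 y)) (hρ : ∀ y ∈ U, ρ.FiniteAtFilter (𝓝 y))
    {C α β : ℝ} (hC : 0 ≤ C) (hα : 0 ≤ α) (hβ : 0 ≤ β) (hαβ : α + β = 1)
    (hdiam : ∀ y ∈ U, ∀ r : ℝ, 0 < r → ball y (2 * r) ⊆ U → ediam (f '' ball y r) ≤
      ENNReal.ofReal (C * r ^ (1 - (Module.finrank ℝ E : ℝ))) * μ (ball y (2 * r)) ^ α *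
        ρ (ball y (2 * r)) ^ β) :
    ∀ᵐ y ∂ν.restrict U, DifferentiableAt ℝ f y ∧ (‖fderiv ℝ f y‖₊ : ℝ≥0∞) ≤
      ENNReal.ofReal (C * 2 ^ Module.finrank ℝ E) * ν (ball 0 1) *
        (upperDensity μ ν y ^ α * upperDensity ρ ν y ^ β) := by
  have hK₀ : ENNReal.ofReal (C * 2 ^ Module.finrank ℝ E) * ν (ball 0 1) ≠ ⊤ :=
    ENNReal.mul_ne_top ENNReal.ofReal_ne_top measure_ball_lt_top.ne
  filter_upwards [ae_upperDensity_lt_top hU hμ, ae_upperDensity_lt_top hU hρ,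
    ae_restrict_mem hU.measurableSet,
    ae_restrict_of_ae (ae_differentiableAt_of_eventually_dist_le f)]
    with y hμy hρy hy hstepanov
  have hratio :=
    upperDiamRatio_le_of_eventually_diam_le (ν := ν) (f := f) hC hα hβ hαβ ?_ hμy.ne hρy.ne
  · obtain ⟨K, hK, -⟩ := ENNReal.lt_iff_exists_nnreal_btwn.1 (hratio.trans_lt
      (ENNReal.mul_lt_top hK₀.lt_top (ENNReal.mul_lt_top (ENNReal.rpow_lt_top_of_nonneg hα hμy.ne)
        (ENNReal.rpow_lt_top_of_nonneg hβ hρy.ne))))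
    exact ⟨hstepanov ⟨K, eventually_dist_le_of_upperDiamRatio_lt hK⟩,
      (nnnorm_fderiv_le_upperDiamRatio f y).trans hratio⟩
  filter_upwards [self_mem_nhdsWithin, (tendsto_const_mul_nhdsGT_zero two_pos).eventually
    (eventually_nhdsGT_ball_subset (hU.mem_nhds hy))] with r hr h2r using hdiam y hy r hr h2r

end FiniteDimensional

theorem statement9_general (n : ℕ) (hn : 2 ≤ n) (p : ℝ)
    (hp : (n : ℝ) - 1 < p ∨ (n = 2 ∧ 1 ≤ p))
    (Ω' : Set (EuclideanSpace ℝ (Fin n))) (hΩ' : IsOpen Ω')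
    (h : EuclideanSpace ℝ (Fin n) → EuclideanSpace ℝ (Fin n))
    (μ : Measure (EuclideanSpace ℝ (Fin n)))
    (hμ : ∀ y ∈ Ω', μ.FiniteAtFilter (𝓝 y))
    (Φ : EuclideanSpace ℝ (Fin n) → ℝ≥0∞) (hΦm : Measurable Φ)
    (hΦ : ∀ K ⊆ Ω', IsCompact K → ∫⁻ x in K, Φ x < ⊤)
    (C : ℝ) (hC : 0 < C)
    (hdiam : ∀ y ∈ Ω', ∀ r : ℝ, 0 < r → Metric.ball y (2 * r) ⊆ Ω' →
      EMetric.diam (h '' Metric.ball y r) ≤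
        ENNReal.ofReal (C * r ^ (1 - (n : ℝ))) *
          μ (Metric.ball y (2 * r)) ^ ((p - (n : ℝ) + 1) / p) *
          (∫⁻ x in Metric.ball y (2 * r), Φ x) ^ (((n : ℝ) - 1) / p)) :
    (∀ᵐ y ∂(volume.restrict Ω'),
      limsup (fun r : ℝ => μ (Metric.ball y r) / volume (Metric.ball y r))
        (𝓝[>] (0 : ℝ)) < ⊤) ∧
    (∀ᵐ y ∂(volume.restrict Ω'), DifferentiableAt ℝ h y) ∧
    (∃ C' : ℝ, 0 < C' ∧
      ∀ᵐ y ∂(volume.restrict Ω'),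
        (‖fderiv ℝ h y‖₊ : ℝ≥0∞) ≤
          ENNReal.ofReal C' *
            (limsup (fun r : ℝ => μ (Metric.ball y r) / volume (Metric.ball y r))
                (𝓝[>] (0 : ℝ))) ^ ((p - (n : ℝ) + 1) / p) *
            Φ y ^ (((n : ℝ) - 1) / p)) ∧
    LocallyIntegrableOn (fun y => ‖fderiv ℝ h y‖) Ω' volume := by
  have hn' : (2 : ℝ) ≤ n := by exact_mod_cast hn
  have hpn : (n : ℝ) - 1 ≤ p ∧ 0 < p := by
    rcases hp with hp | ⟨hn2, hp⟩
    · constructor <;> linarith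
    · rw [hn2]; constructor <;> norm_num <;> linarith
  set α := (p - n + 1) / p
  set β := ((n : ℝ) - 1) / p
  have hα : 0 ≤ α := div_nonneg (by linarith) hpn.2.le
  have hβ : 0 ≤ β := div_nonneg (by linarith) hpn.2.le
  have hαβ : α + β = 1 := by rw [← add_div, div_eq_one_iff_eq hpn.2.ne']; ring
  have hρ : ∀ y ∈ Ω', (volume.withDensity Φ).FiniteAtFilter (𝓝 y) :=
    fun _ => finiteAtFilter_withDensity hΩ' hΦ
  have hmain := ae_differentiableAt_and_nnnorm_fderiv_le (ν := volume) hΩ' hμ hρ hC.le hα hβ hαβ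
    fun y hy r hr h2r => by
      rw [finrank_euclideanSpace_fin, withDensity_apply' Φ]
      exact hdiam y hy r hr h2r
  rw [finrank_euclideanSpace_fin] at hmain
  have hB : 0 < volume.real (ball (0 : EuclideanSpace ℝ (Fin n)) 1) :=
    ENNReal.toReal_pos (measure_ball_pos _ _ one_pos).ne' measure_ball_lt_top.ne
  refine ⟨ae_upperDensity_lt_top hΩ' hμ, hmain.mono fun y hy => hy.1,
    ⟨C * 2 ^ n * volume.real (ball (0 : EuclideanSpace ℝ (Fin n)) 1), by positivity, ?_⟩,
    locallyIntegrableOn_of_enorm_le_upperDensity (measurable_fderiv ℝ h).norm.aestronglyMeasurable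
      hΩ' hμ hρ (ENNReal.mul_ne_top ENNReal.ofReal_ne_top measure_ball_lt_top.ne) hα hβ hαβ
      (hmain.mono fun y hy => (enorm_norm _).trans_le hy.2)⟩
  filter_upwards [hmain, ae_upperDensity_withDensity_le hΦm hΩ' hρ] with y hy hΦy
  rw [ENNReal.ofReal_mul (p := C * 2 ^ n) (by positivity), ofReal_measureReal,
    mul_assoc _ _ (Φ y ^ β)]
  exact hy.2.trans (mul_le_mul_right (mul_le_mul_right (ENNReal.rpow_le_rpow hΦy hβ) _) _)

/-- Steps 1–2 of the proof of Theorems 1.1 and 1.2.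
Let `n ≥ 2`, `p > n−1` (or `p ≥ 1` when `n = 2`), `Ω' ⊆ ℝⁿ` open, `h : Ω' → ℝⁿ`
measurable, `μ` a locally finite Borel measure on `Ω'`, `Φ : Ω' → [0,∞]` locally
integrable and `C > 0` such that the diameter estimate
`diam h(B(y,r)) ≤ C r^{1−n} μ(B(y,2r))^{(p−n+1)/p} (∫_{B(y,2r)} Φ)^{(n−1)/p}` holds
whenever `B(y,2r) ⊆ Ω'`.  Then the upper density `D̄μ` is a.e. finite, `h` is
differentiable a.e. in `Ω'` with
`‖Dh(y)‖ ≤ C' (D̄μ(y))^{(p−n+1)/p} Φ(y)^{(n−1)/p}` a.e. for a constant `C' = C'(n,p,C)`,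
and `‖Dh‖` is locally integrable on `Ω'`. -/
theorem statement9 (n : ℕ) (hn : 2 ≤ n) (p : ℝ)
    (hp : (n : ℝ) - 1 < p ∨ (n = 2 ∧ 1 ≤ p))
    (Ω' : Set (EuclideanSpace ℝ (Fin n))) (hΩ' : IsOpen Ω')
    (h : EuclideanSpace ℝ (Fin n) → EuclideanSpace ℝ (Fin n)) (hmeas : Measurable h)
    (μ : Measure (EuclideanSpace ℝ (Fin n)))
    (hμ : ∀ y ∈ Ω', μ.FiniteAtFilter (𝓝 y))
    (Φ : EuclideanSpace ℝ (Fin n) → ℝ≥0∞) (hΦm : Measurable Φ)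
    (hΦ : ∀ K ⊆ Ω', IsCompact K → ∫⁻ x in K, Φ x < ⊤)
    (C : ℝ) (hC : 0 < C)
    (hdiam : ∀ y ∈ Ω', ∀ r : ℝ, 0 < r → Metric.ball y (2 * r) ⊆ Ω' →
      EMetric.diam (h '' Metric.ball y r) ≤
        ENNReal.ofReal (C * r ^ (1 - (n : ℝ))) *
          μ (Metric.ball y (2 * r)) ^ ((p - (n : ℝ) + 1) / p) *
          (∫⁻ x in Metric.ball y (2 * r), Φ x) ^ (((n : ℝ) - 1) / p)) :
    (∀ᵐ y ∂(volume.restrict Ω'),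
      limsup (fun r : ℝ => μ (Metric.ball y r) / volume (Metric.ball y r))
        (𝓝[>] (0 : ℝ)) < ⊤) ∧
    (∀ᵐ y ∂(volume.restrict Ω'), DifferentiableAt ℝ h y) ∧
    (∃ C' : ℝ, 0 < C' ∧
      ∀ᵐ y ∂(volume.restrict Ω'),
        (‖fderiv ℝ h y‖₊ : ℝ≥0∞) ≤
          ENNReal.ofReal C' *
            (limsup (fun r : ℝ => μ (Metric.ball y r) / volume (Metric.ball y r))
                (𝓝[>] (0 : ℝ))) ^ ((p - (n : ℝ) + 1) / p) *
            Φ y ^ (((n : ℝ) - 1) / p)) ∧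
    LocallyIntegrableOn (fun y => ‖fderiv ℝ h y‖) Ω' volume :=
  statement9_general n hn p hp Ω' hΩ' h μ hμ Φ hΦm hΦ C hC hdiam
end
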